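/- arXiv:2411.11201 — 4 statements merged into one kernel-verified Lean document; each statement's English description precedes it below -/
import Mathlib

section
/- Let p be an odd prime and define L(d) = ∑_{i=(p+1)/2}^{p-1} ( ⌊i·d/p⌋ - ⌊i·d/p - (1 - 1/p)·(p+1)·d/(2p)⌋ ). Then L(p²+1) = ((p-1)/2)·((p²-1)/2). -/
/-!
For `d = p² + 1` we have `i d / p = i p + i / p`, so the first floor is `i p` for `0 ≤ i < p`.
The shift is `(p² - 1) d / (2 p²) = (p² - 1) / 2 + 1 / 2 - 1 / (2 p²)`, and for `p` odd and
`(p + 1) / 2 ≤ i < p` the remaining fractional part `i / p - 1 / 2 + 1 / (2 p²)` lies in `[0, 1)`.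
Hence each of the `(p - 1) / 2` summands equals `(p² - 1) / 2`.
-/

/-- The Booher–Cais lower bound `L(d)` specialized to `j = (p+1)/2`. -/
def L (p d : ℕ) : ℤ :=
  ∑ i ∈ Finset.Icc ((p + 1) / 2) (p - 1),
    (⌊((i : ℚ) * d) / p⌋ -
      ⌊((i : ℚ) * d) / p - (1 - 1 / (p : ℚ)) * (((p : ℚ) + 1) * d) / (2 * p)⌋)

lemma Int.floor_eq_of_sub_mem_Ico {α : Type*} [Ring α] [LinearOrder α] [IsStrictOrderedRing α]
    [FloorRing α] {x : α} {z : ℤ} (h : x - z ∈ Set.Ico 0 1) : ⌊x⌋ = z := by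
  rwa [← Int.floor_eq_zero_iff, Int.floor_sub_intCast, sub_eq_zero] at h

lemma floor_mul_pow_two_add_one_div {p i : ℕ} (hi : i < p) :
    ⌊(i : ℚ) * ((p ^ 2 + 1 : ℕ) : ℚ) / p⌋ = (i * p : ℕ) := by
  have hp : (0 : ℚ) < p := by exact_mod_cast (Nat.zero_le i).trans_lt hi
  apply Int.floor_eq_of_sub_mem_Ico
  have hrem : (i : ℚ) * ((p ^ 2 + 1 : ℕ) : ℚ) / p - ((i * p : ℕ) : ℤ) = i / p := by
    push_cast; field_simp; ring
  rw [hrem]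
  exact ⟨by positivity, (div_lt_one hp).2 (by exact_mod_cast hi)⟩

lemma floor_mul_pow_two_add_one_div_sub {p i : ℕ} (hodd : Odd p) (hi₁ : (p + 1) / 2 ≤ i)
    (hi₂ : i < p) :
    ⌊(i : ℚ) * ((p ^ 2 + 1 : ℕ) : ℚ) / p -
        (1 - 1 / (p : ℚ)) * (((p : ℚ) + 1) * ((p ^ 2 + 1 : ℕ) : ℚ)) / (2 * p)⌋ =
      (i * p : ℕ) - ((p ^ 2 - 1) / 2 : ℕ) := by
  have hn : p ^ 2 = 2 * ((p ^ 2 - 1) / 2) + 1 := by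
    have := Nat.two_mul_div_two_add_one_of_odd (hodd.pow : Odd (p ^ 2)); omega
  generalize (p ^ 2 - 1) / 2 = n at hn ⊢
  have hn' : (n : ℚ) = ((p : ℚ) ^ 2 - 1) / 2 := by
    rw [eq_div_iff two_ne_zero, eq_sub_iff_add_eq]; exact_mod_cast (by omega : n * 2 + 1 = p ^ 2)
  have hp : (0 : ℚ) < p := by exact_mod_cast hodd.pos
  have hi₁' : (p : ℚ) + 1 ≤ 2 * i := by
    obtain ⟨k, rfl⟩ := hodd; exact_mod_cast (by omega : 2 * k + 1 + 1 ≤ 2 * i)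
  have hi₂' : (i : ℚ) + 1 ≤ p := by exact_mod_cast hi₂
  apply Int.floor_eq_of_sub_mem_Ico
  have hrem : (i : ℚ) * ((p ^ 2 + 1 : ℕ) : ℚ) / p -
        (1 - 1 / (p : ℚ)) * (((p : ℚ) + 1) * ((p ^ 2 + 1 : ℕ) : ℚ)) / (2 * p) -
        (((i * p : ℕ) : ℤ) - ((n : ℕ) : ℤ) : ℤ) =
      (2 * i * p - p ^ 2 + 1) / (2 * p ^ 2) := by
    push_cast [hn']; field_simp; ring
  rw [hrem]
  constructor
  · apply div_nonneg <;> nlinarith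
  · rw [div_lt_one (by positivity)]; nlinarith

lemma L_summand_pow_two_add_one {p i : ℕ} (hodd : Odd p)
    (hi : i ∈ Finset.Icc ((p + 1) / 2) (p - 1)) :
    ⌊(i : ℚ) * ((p ^ 2 + 1 : ℕ) : ℚ) / p⌋ -
        ⌊(i : ℚ) * ((p ^ 2 + 1 : ℕ) : ℚ) / p -
          (1 - 1 / (p : ℚ)) * (((p : ℚ) + 1) * ((p ^ 2 + 1 : ℕ) : ℚ)) / (2 * p)⌋ =
      ((p ^ 2 - 1) / 2 : ℕ) := by
  obtain ⟨hi₁, hi₂⟩ := Finset.mem_Icc.1 hi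
  have hip : i < p := by obtain ⟨k, rfl⟩ := hodd; omega
  rw [floor_mul_pow_two_add_one_div hip, floor_mul_pow_two_add_one_div_sub hodd hi₁ hip]
  ring

theorem stmt_2_general (p : ℕ) (hodd : Odd p) :
    L p (p ^ 2 + 1) = (((p - 1) / 2) * ((p ^ 2 - 1) / 2) : ℕ) := by
  have hcard : p - 1 + 1 - (p + 1) / 2 = (p - 1) / 2 := by obtain ⟨k, rfl⟩ := hodd; omega
  rw [L, Finset.sum_congr rfl fun i hi => L_summand_pow_two_add_one hodd hi, Finset.sum_const,
    Nat.card_Icc, hcard, nsmul_eq_mul]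
  push_cast
  ring

theorem stmt_2 (p : ℕ) (hp : p.Prime) (hodd : Odd p) :
    L p (p ^ 2 + 1) = (((p - 1) / 2) * ((p ^ 2 - 1) / 2) : ℕ) :=
  stmt_2_general p hodd
end

section
/- Let p be an odd prime and define L(d) = ∑_{i=(p+1)/2}^{p-1} ( ⌊i·d/p⌋ - ⌊i·d/p - (1 - 1/p)·(p+1)·d/(2p)⌋ ). Then L(p²-1) = ((p-1)/2)·((p²-1)/2). -/
/-!
For `d = p² - 1` and `k = (p² - 1)/2` both arguments of the floors are an integer minus a
number in `(0, 1]`: `i d / p = i p - i / p` and, since `(1 - 1/p)(p + 1) d / (2p) = d² / (2p²)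
= k - 1/2 + 1/(2p²)`, the second one is `i p - k - (i/p - 1/2 + 1/(2p²))`, where
`i/p > 1/2` because `2i > p`. So every summand equals `k`, and there are `(p - 1)/2` of them.
-/

theorem Int.floor_intCast_sub_of_pos_of_le_one {α : Type*} [Ring α] [LinearOrder α]
    [IsStrictOrderedRing α] [FloorRing α] (n : ℤ) {ε : α} (h0 : 0 < ε) (h1 : ε ≤ 1) :
    ⌊(n : α) - ε⌋ = n - 1 := by
  rw [Int.floor_eq_iff]
  push_cast
  exact ⟨sub_le_sub_left h1 _, by rw [sub_add_cancel]; exact sub_lt_self _ h0⟩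

theorem Odd.cast_sq_sub_one_div_two {p : ℕ} (hp : Odd p) :
    (((p ^ 2 - 1) / 2 : ℕ) : ℚ) = ((p : ℚ) ^ 2 - 1) / 2 := by
  obtain ⟨m, rfl⟩ := hp
  have hsq : (2 * m + 1) ^ 2 - 1 = 2 * (2 * m * (m + 1)) := by
    rw [Nat.sub_eq_of_eq_add]; ring
  rw [hsq, Nat.mul_div_cancel_left _ two_pos]
  push_cast
  ring

theorem floor_sub_floor_sq_sub_one {p i : ℕ} (hp : Odd p) (hpi : p < 2 * i) (hip : i < p) :
    ⌊((i : ℚ) * (p ^ 2 - 1 : ℕ)) / p⌋ -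
      ⌊((i : ℚ) * (p ^ 2 - 1 : ℕ)) / p -
        (1 - 1 / (p : ℚ)) * (((p : ℚ) + 1) * (p ^ 2 - 1 : ℕ)) / (2 * p)⌋
      = (((p ^ 2 - 1) / 2 : ℕ) : ℤ) := by
  set k := (p ^ 2 - 1) / 2
  have hp0 : (0 : ℚ) < p := by exact_mod_cast hp.pos
  have hk : (k : ℚ) = ((p : ℚ) ^ 2 - 1) / 2 := hp.cast_sq_sub_one_div_two
  have hd : ((p ^ 2 - 1 : ℕ) : ℚ) = 2 * k := by
    rw [hk, Nat.cast_sub (Nat.one_le_pow _ _ hp.pos)]; push_cast; ring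
  have hhalf : (1 : ℚ) / 2 < i / p := by
    rw [div_lt_div_iff₀ two_pos hp0]; exact_mod_cast (by omega : 1 * p < i * 2)
  have hone : (i : ℚ) / p < 1 := by
    rw [div_lt_one hp0]; exact_mod_cast hip
  have hsmall : 1 / (2 * (p : ℚ) ^ 2) ≤ 1 / 2 := by
    gcongr; nlinarith [(by exact_mod_cast hp.pos : (1 : ℚ) ≤ p)]
  have hfirst : (i : ℚ) * (p ^ 2 - 1 : ℕ) / p = ((i * p : ℤ) : ℚ) - i / p := by
    rw [hd]; push_cast; rw [hk]; field_simp
  have hsecond : (i : ℚ) * (p ^ 2 - 1 : ℕ) / p -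
        (1 - 1 / (p : ℚ)) * (((p : ℚ) + 1) * (p ^ 2 - 1 : ℕ)) / (2 * p)
      = ((i * p - k : ℤ) : ℚ) - (i / p - 1 / 2 + 1 / (2 * (p : ℚ) ^ 2)) := by
    rw [hd]; push_cast; rw [hk]; field_simp; ring
  rw [hsecond, hfirst, Int.floor_intCast_sub_of_pos_of_le_one _ (by positivity) hone.le,
    Int.floor_intCast_sub_of_pos_of_le_one _ (by positivity) (by linarith)]
  ring

theorem stmt_3_general (p : ℕ) (hodd : Odd p) :
    L p (p ^ 2 - 1) = (((p - 1) / 2) * ((p ^ 2 - 1) / 2) : ℕ) := by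
  have hsummand : ∀ i ∈ Finset.Icc ((p + 1) / 2) (p - 1),
      ⌊((i : ℚ) * (p ^ 2 - 1 : ℕ)) / p⌋ -
        ⌊((i : ℚ) * (p ^ 2 - 1 : ℕ)) / p -
          (1 - 1 / (p : ℚ)) * (((p : ℚ) + 1) * (p ^ 2 - 1 : ℕ)) / (2 * p)⌋
        = (((p ^ 2 - 1) / 2 : ℕ) : ℤ) := by
    intro i hi
    obtain ⟨hlo, hhi⟩ := Finset.mem_Icc.mp hi
    obtain ⟨m, rfl⟩ := hodd
    exact floor_sub_floor_sq_sub_one ⟨m, rfl⟩ (by omega) (by omega)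
  have hcard : p - 1 + 1 - (p + 1) / 2 = (p - 1) / 2 := by
    obtain ⟨m, rfl⟩ := hodd
    omega
  rw [L, Finset.sum_congr rfl hsummand, Finset.sum_const, Nat.card_Icc, hcard, nsmul_eq_mul,
    Nat.cast_mul]

theorem stmt_3 (p : ℕ) (hp : p.Prime) (hodd : Odd p) :
    L p (p ^ 2 - 1) = (((p - 1) / 2) * ((p ^ 2 - 1) / 2) : ℕ) :=
  stmt_3_general p hodd
end

section
/- Let p be an odd prime and define L(d) = ∑_{i=(p+1)/2}^{p-1} ( ⌊i·d/p⌋ - ⌊i·d/p - (1 - 1/p)·(p+1)·d/(2p)⌋ ). Then L(p-1) = (p-1)²/4. -/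
theorem Int.floor_intCast_sub_of_pos_of_le_one_s4 {α : Type*} [CommRing α] [LinearOrder α]
    [IsStrictOrderedRing α] [FloorRing α] (m : ℤ) {t : α} (ht0 : 0 < t) (ht1 : t ≤ 1) :
    ⌊(m : α) - t⌋ = m - 1 := by
  rw [Int.floor_eq_iff]
  push_cast
  constructor <;> linarith

theorem L_summand_eq {p k i : ℕ} (hp : p = 2 * k + 1) (hi0 : 1 ≤ i) (hip : i ≤ p) :
    ⌊((i : ℚ) * (p - 1 : ℕ)) / p⌋ -
      ⌊((i : ℚ) * (p - 1 : ℕ)) / p - (1 - 1 / (p : ℚ)) * (((p : ℚ) + 1) * (p - 1 : ℕ)) / (2 * p)⌋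
      = k := by
  subst hp
  have hI0 : (1 : ℚ) ≤ i := by exact_mod_cast hi0
  have hIp : (i : ℚ) ≤ 2 * k + 1 := by exact_mod_cast hip
  have hpos : (0 : ℚ) < 2 * k + 1 := by positivity
  have hfirst : (i : ℚ) * (2 * k) / (2 * k + 1) = ((i : ℤ) : ℚ) - i / (2 * k + 1) := by
    push_cast; field_simp; ring
  have hsecond : (i : ℚ) * (2 * k) / (2 * k + 1)
      - (1 - 1 / (2 * k + 1 : ℚ)) * ((2 * k + 1 + 1) * (2 * k)) / (2 * (2 * k + 1))
      = (((i : ℤ) - k : ℤ) : ℚ) - (i * (2 * k + 1) - k) / (2 * k + 1) ^ 2 := by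
    push_cast; field_simp; ring
  push_cast
  rw [hsecond, hfirst, Int.floor_intCast_sub_of_pos_of_le_one_s4 _ (by positivity)
      ((div_le_one hpos).2 hIp), Int.floor_intCast_sub_of_pos_of_le_one_s4]
  · ring
  · apply div_pos <;> nlinarith
  · rw [div_le_one (by positivity)]; nlinarith

theorem L_odd_pred {p k : ℕ} (hp : p = 2 * k + 1) : L p (p - 1) = k ^ 2 := by
  rw [L, Finset.sum_congr rfl fun i hi => L_summand_eq hp (by simp at hi; omega) (by simp at hi; omega),
    Finset.sum_const, Nat.card_Icc, show p - 1 + 1 - (p + 1) / 2 = k by omega]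
  simp [sq]

theorem stmt_4_general (p : ℕ) (hodd : Odd p) :
    L p (p - 1) = (((p - 1) ^ 2 / 4) : ℕ) := by
  obtain ⟨k, hk⟩ := hodd
  have hsq : (p - 1) ^ 2 / 4 = k ^ 2 := by
    rw [hk, Nat.add_sub_cancel, mul_pow, show 2 ^ 2 = 4 by rfl, Nat.mul_div_cancel_left _ (by norm_num)]
  rw [L_odd_pred hk, hsq]
  push_cast
  ring

theorem stmt_4 (p : ℕ) (hp : p.Prime) (hodd : Odd p) :
    L p (p - 1) = (((p - 1) ^ 2 / 4) : ℕ) :=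
  stmt_4_general p hodd
end

section
/- Let p be an odd prime, d a positive integer with p ∤ d, and define L(d) = ∑_{i=(p+1)/2}^{p-1} ( ⌊i·d/p⌋ - ⌊i·d/p - (1 - 1/p)·(p+1)·d/(2p)⌋ ). Then L(d) ≤ (p-1)(d-1)/2. -/
/-!
Each summand `⌊x⌋ - ⌊x - c⌋`, with `x = i d / p` and `c = (1 - 1/p²) d / 2 ≤ d / 2`, is at most
`d - 1`: this amounts to `c ≤ fract x + d - 1`, which is clear for `d ≥ 2`, while for `d = 1` it
holds because `i ≥ p / 2` makes `fract x = i / p ≥ 1 / 2`. There are `(p - 1) / 2` summands.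
-/

theorem Int.floor_sub_floor_sub_le {α : Type*} [CommRing α] [LinearOrder α] [IsStrictOrderedRing α]
    [FloorRing α] {x c : α} {n : ℤ} (h : c ≤ Int.fract x + n) : ⌊x⌋ - ⌊x - c⌋ ≤ n := by
  rw [sub_le_comm, Int.le_floor]
  push_cast
  rw [Int.fract] at h
  linarith

theorem booherCais_shift_le_half (p d : ℕ) :
    (1 - 1 / (p : ℚ)) * (((p : ℚ) + 1) * d) / (2 * p) ≤ d / 2 := by
  rcases Nat.eq_zero_or_pos p with rfl | hp
  · simp only [Nat.cast_zero, div_zero, mul_zero]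
    positivity
  have hpq : (0 : ℚ) < p := by exact_mod_cast hp
  have hexpand : (1 - 1 / (p : ℚ)) * (((p : ℚ) + 1) * d) / (2 * p) = d / 2 - d / (2 * p ^ 2) := by
    field_simp
    ring
  rw [hexpand]
  have hcorr : (0 : ℚ) ≤ d / (2 * p ^ 2) := by positivity
  linarith

theorem one_sub_half_le_fract_mul_div {p i d : ℕ} (hpi : p ≤ 2 * i) (hip : i < p) (hd : 0 < d) :
    1 - (d : ℚ) / 2 ≤ Int.fract ((i : ℚ) * d / p) := by
  obtain rfl | hd2 := (Nat.one_le_iff_ne_zero.mpr hd.ne').eq_or_lt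
  · have hpq : (0 : ℚ) < p := by exact_mod_cast (Nat.zero_le i).trans_lt hip
    have hfract : Int.fract ((i : ℚ) * (1 : ℕ) / p) = i / p := by
      rw [Nat.cast_one, mul_one, Int.fract_eq_self]
      exact ⟨by positivity, (div_lt_one hpq).mpr (by exact_mod_cast hip)⟩
    rw [hfract, le_div_iff₀ hpq]
    have : (p : ℚ) ≤ 2 * i := by exact_mod_cast hpi
    push_cast
    linarith
  · have : (2 : ℚ) ≤ d := by exact_mod_cast hd2
    linarith [Int.fract_nonneg ((i : ℚ) * d / p)]

theorem L_summand_le {p i d : ℕ} (hp : 0 < p) (hi : i ∈ Finset.Icc ((p + 1) / 2) (p - 1))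
    (hd : 0 < d) :
    ⌊((i : ℚ) * d) / p⌋ -
      ⌊((i : ℚ) * d) / p - (1 - 1 / (p : ℚ)) * (((p : ℚ) + 1) * d) / (2 * p)⌋ ≤ d - 1 := by
  rw [Finset.mem_Icc] at hi
  apply Int.floor_sub_floor_sub_le
  have hfract := one_sub_half_le_fract_mul_div (p := p) (i := i) (by omega) (by omega) hd
  have hshift := booherCais_shift_le_half p d
  push_cast
  linarith

theorem stmt_9_general (p d : ℕ) (hodd : Odd p) (hd : 0 < d) :
    L p d ≤ ((p - 1) * (d - 1) / 2 : ℕ) := by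
  have hcard : (Finset.Icc ((p + 1) / 2) (p - 1)).card = (p - 1) / 2 := by
    obtain ⟨k, rfl⟩ := hodd
    rw [Nat.card_Icc]
    omega
  have hrhs : (p - 1) * (d - 1) / 2 = (p - 1) / 2 * (d - 1) :=
    (Nat.div_mul_right_comm (Nat.Odd.sub_odd hodd odd_one).two_dvd _).symm
  calc L p d ≤ (Finset.Icc ((p + 1) / 2) (p - 1)).card • ((d : ℤ) - 1) :=
        Finset.sum_le_card_nsmul _ _ _ fun i hi => L_summand_le hodd.pos hi hd
    _ = ((p - 1) * (d - 1) / 2 : ℕ) := by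
        rw [hcard, hrhs, nsmul_eq_mul]
        push_cast [Nat.cast_sub hd]
        ring

theorem stmt_9 (p d : ℕ) (hp : p.Prime) (hodd : Odd p) (hd : 0 < d)
    (hpd : ¬ p ∣ d) :
    L p d ≤ ((p - 1) * (d - 1) / 2 : ℕ) :=
  stmt_9_general p d hodd hd
end
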